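/- arXiv:2002.12722 — 4 statements merged into one kernel-verified Lean document; each statement's English description precedes it below -/
import Mathlib

section
/- The unique invariant probability distribution λ of the irreducible finite-state Markov chain (Z_n) satisfies, for every i ∈ L, λ_i = (Σ_{g∈G(i)} π(g)) / (Σ_{j∈L} Σ_{g∈G(j)} π(g)); in particular the denominator Σ_{j∈L} Σ_{g∈G(j)} π(g) is strictly positive. -/
/-!
Write `σ_i = Σ_{g∈G(i)} π(g)` and call `h : L → L` a cycle graph through `j` if iterating `h`
leads every state to `j`. Deleting the arrow out of `j` is a bijection from cycle graphs through
`j` to pairs `(g, j → k)` with `g ∈ G(j)`; deleting instead the arrow `i → j` that enters `j` on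
the cycle is a bijection onto pairs `(g, i → j)` with `g ∈ G(i)`. Weighing both by `π` gives
`Σ_i σ_i p_ij = σ_j Σ_k p_jk = σ_j`, so `σ` is invariant. Every `σ_j` is positive, witnessed by
the `{j}`-graph sending each state to the first step of a shortest positive path to `j`. Finally
scaling `σ` by the least ratio `λ_i / σ_i` makes it touch `λ` from below; the set where the two
touch is closed under positive transitions into it, hence by irreducibility it is everything.
-/

open scoped ENNReal Classical

namespace FW

/-- `g` represents a `W`-graph on `Fin l`: the arrows are `i → g i` for `i ∉ W`
(we normalize `g i = i` on `W`); every `i ∉ W` is the initial point of exactly one arrow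
`i → g i` with `g i ≠ i`, and from every `i ∉ W` the arrows lead to some point of `W`. -/
def IsWGraph {l : ℕ} (W : Finset (Fin l)) (g : Fin l → Fin l) : Prop :=
  (∀ i ∈ W, g i = i) ∧ ∀ i ∉ W, g i ≠ i ∧ ∃ n : ℕ, g^[n] i ∈ W

/-- `Σ_{g ∈ G(W)} π(g)` where `π(g) = ∏_{(i→j) ∈ g} p_{ij}`. -/
noncomputable def graphSum {l : ℕ} (p : Fin l → Fin l → ℝ≥0∞) (W : Finset (Fin l)) : ℝ≥0∞ :=
  ∑ g ∈ Finset.univ.filter (IsWGraph W), ∏ i ∈ Wᶜ, p i (g i)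

/-- `n`-step transition probabilities. -/
noncomputable def matPow {l : ℕ} (p : Fin l → Fin l → ℝ≥0∞) : ℕ → Fin l → Fin l → ℝ≥0∞
  | 0 => fun i j => if i = j then 1 else 0
  | n + 1 => fun i j => ∑ k, matPow p n i k * p k j

/-- Irreducibility of the transition matrix `p`. -/
def Irreducible {l : ℕ} (p : Fin l → Fin l → ℝ≥0∞) : Prop :=
  ∀ i j : Fin l, ∃ n : ℕ, 0 < matPow p n i j

open Finset Function

section Iterate

variable {α : Type*}

theorem exists_iterate_update_eq [DecidableEq α] {f : α → α} {t : α} (x : α) {n : ℕ} {m : α}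
    (h : f^[n] m = t) : ∃ k, (update f t x)^[k] m = t := by
  induction n generalizing m with
  | zero => exact ⟨0, h⟩
  | succ n ih =>
    by_cases hmt : m = t
    · exact ⟨0, hmt⟩
    obtain ⟨k, hk⟩ := ih (by rwa [iterate_succ_apply] at h)
    exact ⟨k + 1, by rwa [iterate_succ_apply, update_of_ne hmt]⟩

theorem exists_iterate_eq_of_lt {g : α → α} {j : α} (d : α → ℕ)
    (hd : ∀ i ≠ j, d (g i) < d i) (i : α) : ∃ n, g^[n] i = j := by
  induction i using (measure d).wf.induction with
  | h i ih =>
    by_cases hij : i = j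
    · exact ⟨0, hij⟩
    obtain ⟨n, hn⟩ := ih (g i) (hd i hij)
    exact ⟨n + 1, by rwa [iterate_succ_apply]⟩

noncomputable def cyclePred (h : α → α) (j : α) : α :=
  h^[minimalPeriod h j - 1] j

theorem apply_cyclePred {h : α → α} {j : α} (hj : j ∈ periodicPts h) :
    h (cyclePred h j) = j := by
  rw [cyclePred, ← iterate_succ_apply' h, Nat.succ_eq_add_one,
    Nat.sub_add_cancel (minimalPeriod_pos_of_mem_periodicPts hj)]
  exact iterate_minimalPeriod

theorem cyclePred_eq {h : α → α} {i j : α} (hi : h i = j) {n : ℕ} (hn : h^[n] j = i) :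
    cyclePred h j = i := by
  have hper : IsPeriodicPt h (n + 1) j := by
    rw [IsPeriodicPt, IsFixedPt, iterate_succ_apply', hn, hi]
  obtain ⟨q, hq⟩ := hper.minimalPeriod_dvd
  have hpos := hper.minimalPeriod_pos n.succ_pos
  set c := minimalPeriod h j
  obtain ⟨q, rfl⟩ : ∃ q', q = q' + 1 := Nat.exists_eq_succ_of_ne_zero (by rintro rfl; omega)
  have hmod : n % c = c - 1 := by
    rw [show n = c - 1 + c * q by rw [mul_add] at hq; omega, Nat.add_mul_mod_self_left]
    exact Nat.mod_eq_of_lt (by omega)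
  rw [cyclePred, ← hmod, iterate_mod_minimalPeriod_eq, hn]

end Iterate

theorem prod_apply_update {ι M : Type*} [Fintype ι] [DecidableEq ι] [CommMonoid M]
    (p : ι → ι → M) (g : ι → ι) (i k : ι) :
    ∏ m, p m (update g i k m) = p i k * ∏ m ∈ {i}ᶜ, p m (g m) := by
  simp_rw [apply_update (fun m => p m), prod_update_of_mem (mem_univ i), compl_eq_univ_sdiff]

theorem ne_top_of_sum_eq_one {ι : Type*} {s : Finset ι} {f : ι → ℝ≥0∞}
    (h : ∑ i ∈ s, f i = 1) {i : ι} (hi : i ∈ s) : f i ≠ ⊤ :=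
  (ENNReal.lt_top_of_sum_ne_top (h ▸ ENNReal.one_ne_top) hi).ne

theorem eq_of_le_of_sum_eq_sum {ι : Type*} {s : Finset ι} {f g : ι → ℝ≥0∞}
    (hle : ∀ i ∈ s, f i ≤ g i) (htop : ∑ i ∈ s, g i ≠ ⊤)
    (heq : ∑ i ∈ s, f i = ∑ i ∈ s, g i) {i : ι} (hi : i ∈ s) :
    f i = g i := by
  refine (hle i hi).antisymm (not_lt.1 fun hlt => heq.not_lt ?_)
  have hrest : ∑ m ∈ s.erase i, f m ≤ ∑ m ∈ s.erase i, g m :=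
    sum_le_sum fun m hm => hle m (mem_of_mem_erase hm)
  rw [← add_sum_erase s f hi, ← add_sum_erase s g hi]
  exact ENNReal.add_lt_add_of_lt_of_le
    (ne_top_of_le_ne_top htop (hrest.trans (sum_le_sum_of_subset (erase_subset i s)))) hlt hrest

def IsInvariant {ι : Type*} [Fintype ι] (p : ι → ι → ℝ≥0∞) (μ : ι → ℝ≥0∞) : Prop :=
  ∀ j, ∑ i, μ i * p i j = μ j

section Invariant

variable {ι : Type*} [Fintype ι] {p : ι → ι → ℝ≥0∞} {μ ν : ι → ℝ≥0∞}

theorem IsInvariant.const_mul (hμ : IsInvariant p μ) (c : ℝ≥0∞) :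
    IsInvariant p fun i => c * μ i := fun j => by
  simp_rw [mul_assoc, ← mul_sum, hμ j]

theorem IsInvariant.eq_of_le (hp : ∀ i j, p i j ≠ ⊤)
    (hconn : ∀ i j, Relation.ReflTransGen (fun a b => p a b ≠ 0) i j)
    (hμ : IsInvariant p μ) (hν : IsInvariant p ν) (hν_top : ∀ i, ν i ≠ ⊤)
    (hle : ∀ i, μ i ≤ ν i) {j : ι} (hj : μ j = ν j) : μ = ν := by
  funext i
  induction hconn i j using Relation.ReflTransGen.head_induction_on with
  | refl => exact hj
  | @head i k hik _ ih =>
    have hterm : μ i * p i k = ν i * p i k :=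
      eq_of_le_of_sum_eq_sum (f := fun m => μ m * p m k) (g := fun m => ν m * p m k)
        (fun m _ => by gcongr; exact hle m) (by rw [hν k]; exact hν_top k)
        (by rw [hμ k, hν k, ih]) (mem_univ i)
    exact (ENNReal.mul_left_inj hik (hp i k)).1 hterm

theorem IsInvariant.eq_of_sum_eq_one (hp : ∀ i j, p i j ≠ ⊤)
    (hconn : ∀ i j, Relation.ReflTransGen (fun a b => p a b ≠ 0) i j)
    (hμ : IsInvariant p μ) (hν : IsInvariant p ν) (hμ0 : ∀ i, μ i ≠ 0)
    (hμ1 : ∑ i, μ i = 1) (hν1 : ∑ i, ν i = 1) : ν = μ := by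
  have hne : (univ : Finset ι).Nonempty := nonempty_of_sum_ne_zero (hμ1 ▸ one_ne_zero)
  have hμ_top : ∀ i, μ i ≠ ⊤ := fun i => ne_top_of_sum_eq_one hμ1 (mem_univ i)
  have hν_top : ∀ i, ν i ≠ ⊤ := fun i => ne_top_of_sum_eq_one hν1 (mem_univ i)
  obtain ⟨k, -, hk⟩ := exists_min_image univ (fun i => ν i / μ i) hne
  set c := ν k / μ k
  have hscaled : (fun i => c * μ i) = ν :=
    (hμ.const_mul c).eq_of_le hp hconn hν hν_top
      (fun i => (ENNReal.le_div_iff_mul_le (.inl (hμ0 i)) (.inl (hμ_top i))).1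
        (hk i (mem_univ i)))
      (ENNReal.div_mul_cancel (hμ0 k) (hμ_top k))
  have hc : c = 1 := by
    simpa [← hscaled, ← mul_sum, hμ1] using hν1
  simpa [hc] using hscaled.symm

end Invariant

section Graphs

variable {l : ℕ} {p : Fin l → Fin l → ℝ≥0∞}

theorem isWGraph_singleton_iff {j : Fin l} {g : Fin l → Fin l} :
    IsWGraph {j} g ↔ g j = j ∧ ∀ i, ∃ n, g^[n] i = j := by
  simp only [IsWGraph, mem_singleton, forall_eq]
  constructor
  · rintro ⟨hj, hreach⟩
    refine ⟨hj, fun i => ?_⟩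
    by_cases hij : i = j
    · exact ⟨0, hij⟩
    · exact (hreach i hij).2
  · rintro ⟨hj, hreach⟩
    refine ⟨hj, fun i hij => ⟨fun hfix => ?_, hreach i⟩⟩
    obtain ⟨n, hn⟩ := hreach i
    exact hij (by rwa [iterate_fixed hfix] at hn)

-- Functional graphs in which every state leads to `j`, so that `j` lies on their unique cycle.
noncomputable def cycleGraphs (j : Fin l) : Finset (Fin l → Fin l) :=
  univ.filter fun h => ∀ i, ∃ n, h^[n] i = j

theorem mem_cycleGraphs {j : Fin l} {h : Fin l → Fin l} :
    h ∈ cycleGraphs j ↔ ∀ i, ∃ n, h^[n] i = j := by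
  simp [cycleGraphs]

theorem mem_periodicPts_of_mem_cycleGraphs {j : Fin l} {h : Fin l → Fin l}
    (hh : h ∈ cycleGraphs j) : j ∈ periodicPts h := by
  obtain ⟨n, hn⟩ := mem_cycleGraphs.1 hh (h j)
  exact mk_mem_periodicPts n.succ_pos (by rwa [IsPeriodicPt, IsFixedPt, iterate_succ_apply])

theorem sum_cycleGraphs_eq_graphSum_mul (j : Fin l) :
    ∑ h ∈ cycleGraphs j, ∏ i, p i (h i) = graphSum p {j} * ∑ k, p j k := by
  rw [graphSum, sum_mul_sum, ← sum_product']
  refine (sum_nbij' (fun gk => update gk.1 j gk.2) (fun h => (update h j j, h j))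
    ?_ ?_ ?_ ?_ ?_).symm
  · rintro ⟨g, k⟩ hgk
    dsimp only
    obtain ⟨-, hreach⟩ := isWGraph_singleton_iff.1 (mem_filter.1 (mem_product.1 hgk).1).2
    exact mem_cycleGraphs.2 fun i => exists_iterate_update_eq k (hreach i).choose_spec
  · intro h hh
    refine mem_product.2 ⟨mem_filter.2 ⟨mem_univ _, isWGraph_singleton_iff.2 ⟨update_self .., ?_⟩⟩,
      mem_univ _⟩
    exact fun i => exists_iterate_update_eq j (mem_cycleGraphs.1 hh i).choose_spec
  · rintro ⟨g, k⟩ hgk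
    have hgj := (isWGraph_singleton_iff.1 (mem_filter.1 (mem_product.1 hgk).1).2).1
    dsimp only at hgj ⊢
    rw [update_idem, update_self, update_eq_self_iff.2 hgj.symm]
  · intro h _
    simp only [update_idem, update_eq_self]
  · rintro ⟨g, k⟩ -
    rw [prod_apply_update, mul_comm]

theorem sum_cycleGraphs_eq_sum_graphSum_mul (j : Fin l) :
    ∑ h ∈ cycleGraphs j, ∏ i, p i (h i) = ∑ i, graphSum p {i} * p i j := by
  simp_rw [graphSum, sum_mul]
  rw [sum_sigma']
  refine (sum_nbij' (fun ig => update ig.2 ig.1 j)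
    (fun h => ⟨cyclePred h j, update h (cyclePred h j) (cyclePred h j)⟩) ?_ ?_ ?_ ?_ ?_).symm
  · rintro ⟨i, g⟩ hig
    dsimp only
    obtain ⟨-, hreach⟩ := isWGraph_singleton_iff.1 (mem_filter.1 (mem_sigma.1 hig).2).2
    refine mem_cycleGraphs.2 fun m => ?_
    obtain ⟨n, hn⟩ := exists_iterate_update_eq j (hreach m).choose_spec
    exact ⟨n + 1, by rw [iterate_succ_apply', hn, update_self]⟩
  · intro h hh
    refine mem_sigma.2 ⟨mem_univ _, mem_filter.2 ⟨mem_univ _,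
      isWGraph_singleton_iff.2 ⟨update_self .., fun m => ?_⟩⟩⟩
    obtain ⟨n, hn⟩ := mem_cycleGraphs.1 hh m
    exact exists_iterate_update_eq _ (n := minimalPeriod h j - 1 + n)
      (by rw [iterate_add_apply, hn]; rfl)
  · rintro ⟨i, g⟩ hig
    obtain ⟨hgi, hreach⟩ := isWGraph_singleton_iff.1 (mem_filter.1 (mem_sigma.1 hig).2).2
    obtain ⟨n, hn⟩ := exists_iterate_update_eq j (hreach j).choose_spec
    dsimp only
    rw [cyclePred_eq (update_self ..) hn, update_idem, update_eq_self_iff.2 hgi.symm]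
  · intro h hh
    dsimp only
    rw [update_idem,
      update_eq_self_iff.2 (apply_cyclePred (mem_periodicPts_of_mem_cycleGraphs hh)).symm]
  · rintro ⟨i, g⟩ -
    dsimp only
    rw [prod_apply_update, mul_comm]

theorem isInvariant_graphSum (hrow : ∀ i, ∑ j, p i j = 1) :
    IsInvariant p fun i => graphSum p {i} := fun j => by
  rw [← sum_cycleGraphs_eq_sum_graphSum_mul, sum_cycleGraphs_eq_graphSum_mul, hrow, mul_one]

theorem graphSum_ne_top (hp : ∀ i j, p i j ≠ ⊤) (W : Finset (Fin l)) : graphSum p W ≠ ⊤ :=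
  ENNReal.sum_ne_top.2 fun g _ => ENNReal.prod_ne_top fun i _ => hp i (g i)

end Graphs

section Irreducible

variable {l : ℕ} {p : Fin l → Fin l → ℝ≥0∞}

theorem matPow_eq_pow (n : ℕ) : matPow p n = Matrix.of p ^ n := by
  induction n with
  | zero => ext i j; simp [matPow, Matrix.one_apply]
  | succ n ih => ext i j; simp [matPow, pow_succ, Matrix.mul_apply, ih]

theorem matPow_succ' (n : ℕ) (i j : Fin l) :
    matPow p (n + 1) i j = ∑ k, p i k * matPow p n k j := by
  simp [matPow_eq_pow, pow_succ', Matrix.mul_apply]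

theorem reflTransGen_of_matPow_ne_zero {n : ℕ} {i j : Fin l} (h : matPow p n i j ≠ 0) :
    Relation.ReflTransGen (fun a b => p a b ≠ 0) i j := by
  induction n generalizing j with
  | zero =>
    obtain rfl : i = j := by by_contra hij; simp [matPow, hij] at h
    exact .refl
  | succ n ih =>
    obtain ⟨k, -, hk⟩ := exists_ne_zero_of_sum_ne_zero h
    exact (ih (left_ne_zero_of_mul hk)).tail (right_ne_zero_of_mul hk)

theorem Irreducible.reflTransGen (hirr : Irreducible p) (i j : Fin l) :
    Relation.ReflTransGen (fun a b => p a b ≠ 0) i j :=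
  reflTransGen_of_matPow_ne_zero (hirr i j).choose_spec.ne'

theorem Irreducible.exists_isWGraph_prod_ne_zero (hirr : Irreducible p) (j : Fin l) :
    ∃ g, IsWGraph {j} g ∧ ∏ i ∈ {j}ᶜ, p i (g i) ≠ 0 := by
  let d i := Nat.find (hirr i j)
  have hstep : ∀ i ≠ j, ∃ k, p i k ≠ 0 ∧ d k < d i := by
    intro i hij
    obtain ⟨n, hn⟩ : ∃ n, d i = n + 1 := Nat.exists_eq_succ_of_ne_zero fun h0 => hij (by
      have := Nat.find_eq_zero (hirr i j) |>.1 h0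
      by_contra hij; simp [matPow, hij] at this)
    have hpos : matPow p (n + 1) i j ≠ 0 := by
      rw [← hn]; exact (Nat.find_spec (hirr i j)).ne'
    rw [matPow_succ'] at hpos
    obtain ⟨k, -, hk⟩ := exists_ne_zero_of_sum_ne_zero hpos
    exact ⟨k, left_ne_zero_of_mul hk,
      (Nat.find_min' (hirr k j) (pos_iff_ne_zero.2 (right_ne_zero_of_mul hk))).trans_lt
        (hn ▸ n.lt_succ_self)⟩
  choose! s hs using hstep
  have hg : ∀ i ≠ j, update s j j i = s i := fun i hij => update_of_ne hij _ _
  refine ⟨update s j j, isWGraph_singleton_iff.2 ⟨update_self .., ?_⟩, ?_⟩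
  · exact exists_iterate_eq_of_lt d fun i hij => hg i hij ▸ (hs i hij).2
  · refine prod_ne_zero_iff.2 fun i hi => ?_
    have hij : i ≠ j := by simpa using hi
    exact hg i hij ▸ (hs i hij).1

theorem Irreducible.graphSum_ne_zero (hirr : Irreducible p) (j : Fin l) : graphSum p {j} ≠ 0 := by
  obtain ⟨g, hg, hprod⟩ := hirr.exists_isWGraph_prod_ne_zero j
  exact ne_of_gt <| hprod.bot_lt.trans_le <|
    single_le_sum (f := fun g => ∏ i ∈ {j}ᶜ, p i (g i)) (fun _ _ => zero_le)
      (mem_filter.2 ⟨mem_univ g, hg⟩)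

end Irreducible

theorem invariant_eq_graphSum_div_general {l : ℕ}
    (p : Fin l → Fin l → ℝ≥0∞) (hrow : ∀ i, ∑ j, p i j = 1)
    (hirr : Irreducible p)
    (lam : Fin l → ℝ≥0∞) (hlam : ∑ i, lam i = 1)
    (hinv : ∀ j, ∑ i, lam i * p i j = lam j) :
    0 < ∑ j, graphSum p {j} ∧
      ∀ i, lam i = graphSum p {i} / ∑ j, graphSum p {j} := by
  have hp : ∀ i j, p i j ≠ ⊤ := fun i j => ne_top_of_sum_eq_one (hrow i) (mem_univ j)
  set Q := ∑ j, graphSum p {j}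
  obtain ⟨i₀, -, -⟩ := exists_ne_zero_of_sum_ne_zero (hlam ▸ one_ne_zero)
  have hQ0 : Q ≠ 0 := fun h => hirr.graphSum_ne_zero i₀ (sum_eq_zero_iff.1 h i₀ (mem_univ _))
  have hQtop : Q ≠ ⊤ := ENNReal.sum_ne_top.2 fun j _ => graphSum_ne_top hp {j}
  have hμ : IsInvariant p fun i => Q⁻¹ * graphSum p {i} :=
    (isInvariant_graphSum hrow).const_mul _
  have hlam_eq := hμ.eq_of_sum_eq_one hp hirr.reflTransGen hinv
    (fun i => mul_ne_zero (ENNReal.inv_ne_zero.2 hQtop) (hirr.graphSum_ne_zero i))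
    (by rw [← mul_sum, ENNReal.inv_mul_cancel hQ0 hQtop]) hlam
  refine ⟨pos_iff_ne_zero.2 hQ0, fun i => ?_⟩
  rw [hlam_eq, ENNReal.div_eq_inv_mul]

/-- The unique invariant probability distribution `λ` of an irreducible
finite-state Markov chain with transition probabilities `p` satisfies, for every state `i`,
`λ_i = (Σ_{g∈G(i)} π(g)) / (Σ_{j} Σ_{g∈G(j)} π(g))`; in particular the denominator is
strictly positive. -/
theorem invariant_eq_graphSum_div {l : ℕ} (hl : 2 ≤ l)
    (p : Fin l → Fin l → ℝ≥0∞) (hrow : ∀ i, ∑ j, p i j = 1)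
    (hirr : Irreducible p)
    (lam : Fin l → ℝ≥0∞) (hlam : ∑ i, lam i = 1)
    (hinv : ∀ j, ∑ i, lam i * p i j = lam j) :
    0 < ∑ j, graphSum p {j} ∧
      ∀ i, lam i = graphSum p {i} / ∑ j, graphSum p {j} :=
  invariant_eq_graphSum_div_general p hrow hirr lam hlam hinv

end FW
end

section
/- There exists γ₀ ∈ (0,1) such that for every γ ∈ (0,γ₀] and every nonnegative random variable Z with E[Z] = 1 and E[Z²] ≤ 9/4, one has E[e^{−γZ}] · e^{γ/(1+2γ)} ≤ e^{−γ²}. -/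
/-!
Bounding `e^{-x} ≤ 1 - x + x²/2` pointwise turns the moment hypotheses into
`E[e^{-γZ}] ≤ 1 - γ + 9γ²/8`. It then suffices that `1 - γ + 9γ²/8 ≤ e^{-s}` for
`s = γ/(1+2γ) + γ²`, and this follows from `(1 - s/2)² ≤ e^{-s}`: expanding,
`(1 - s/2)² = 1 - γ + 5γ²/4 + O(γ³)`, which beats `9/8` for small `γ`.
-/

open MeasureTheory

namespace Real

theorem exp_neg_le_one_sub_add_sq_div_two {x : ℝ} (hx : 0 ≤ x) :
    exp (-x) ≤ 1 - x + x ^ 2 / 2 := by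
  have hq : 0 ≤ 1 - x + x ^ 2 / 2 := by nlinarith [sq_nonneg (x - 1)]
  rw [exp_neg, inv_le_iff_one_le_mul₀ (exp_pos x)]
  nlinarith [mul_le_mul_of_nonneg_left (quadratic_le_exp_of_nonneg hx) hq, sq_nonneg (x ^ 2)]

theorem one_sub_add_sq_mul_exp_le_exp_neg_sq {γ : ℝ} (h0 : 0 ≤ γ) (h1 : γ ≤ 1 / 40) :
    (1 - γ + 9 / 8 * γ ^ 2) * exp (γ / (1 + 2 * γ)) ≤ exp (-γ ^ 2) := by
  set s := γ / (1 + 2 * γ) + γ ^ 2 with hs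
  have hpos : 0 < 1 + 2 * γ := by linarith
  have hs2 : s ≤ (2 : ℕ) := by
    rw [hs, Nat.cast_ofNat, div_add' _ _ _ hpos.ne', div_le_iff₀ hpos]
    nlinarith
  have hquad : 1 - γ + 9 / 8 * γ ^ 2 ≤ (1 - s / 2) ^ 2 := by
    rw [hs, div_add' _ _ _ hpos.ne', div_div, one_sub_div (by positivity), div_pow,
      le_div_iff₀ (by positivity)]
    nlinarith [pow_nonneg h0 2, pow_nonneg h0 3, pow_nonneg h0 4, pow_nonneg h0 5]
  calc (1 - γ + 9 / 8 * γ ^ 2) * exp (γ / (1 + 2 * γ))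
      ≤ exp (-s) * exp (γ / (1 + 2 * γ)) := by
        gcongr
        exact hquad.trans (by simpa using one_sub_div_pow_le_exp_neg hs2)
    _ = exp (-γ ^ 2) := by rw [← exp_add, hs]; ring_nf

end Real

section

variable {Ω : Type*} [MeasurableSpace Ω] {μ : Measure Ω}

theorem integrable_of_lintegral_ofReal_ne_top {f : Ω → ℝ} (hfm : AEStronglyMeasurable f μ)
    (hf : 0 ≤ᵐ[μ] f) (hfi : ∫⁻ ω, ENNReal.ofReal (f ω) ∂μ ≠ ⊤) : Integrable f μ :=
  ⟨hfm, (hasFiniteIntegral_iff_ofReal hf).2 hfi.lt_top⟩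

theorem integral_exp_neg_mul_le [IsProbabilityMeasure μ] {Z : Ω → ℝ} (hZ : 0 ≤ᵐ[μ] Z)
    (hZi : Integrable Z μ) (hZ2i : Integrable (fun ω ↦ Z ω ^ 2) μ) {γ : ℝ} (hγ : 0 ≤ γ) :
    ∫ ω, Real.exp (-γ * Z ω) ∂μ ≤ 1 - γ * ∫ ω, Z ω ∂μ + γ ^ 2 / 2 * ∫ ω, Z ω ^ 2 ∂μ := by
  have hpoint : (fun ω ↦ Real.exp (-γ * Z ω)) ≤ᵐ[μ]
      fun ω ↦ 1 - γ * Z ω + γ ^ 2 / 2 * Z ω ^ 2 := by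
    filter_upwards [hZ] with ω hω
    have := Real.exp_neg_le_one_sub_add_sq_div_two (mul_nonneg hγ hω)
    rw [neg_mul]
    linarith
  have hlin : Integrable (fun ω ↦ 1 - γ * Z ω) μ := (integrable_const 1).sub (hZi.const_mul γ)
  have hquad : Integrable (fun ω ↦ 1 - γ * Z ω + γ ^ 2 / 2 * Z ω ^ 2) μ :=
    hlin.add (hZ2i.const_mul _)
  refine (integral_mono_of_nonneg (.of_forall fun ω ↦ (Real.exp_pos _).le) hquad hpoint).trans_eq ?_
  rw [integral_add hlin (hZ2i.const_mul _), integral_sub (integrable_const 1) (hZi.const_mul γ),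
    integral_const_mul, integral_const_mul, integral_const, probReal_univ, one_smul]

end

/-- There exists `γ₀ ∈ (0,1)` such that for every `γ ∈ (0,γ₀]` and every
nonnegative random variable `Z` with `E[Z] = 1` and `E[Z²] ≤ 9/4`, one has
`E[e^{−γZ}] · e^{γ/(1+2γ)} ≤ e^{−γ²}`. -/
theorem exists_gamma_mgf_bound :
    ∃ γ₀ ∈ Set.Ioo (0 : ℝ) 1, ∀ γ ∈ Set.Ioc (0 : ℝ) γ₀,
      ∀ (Ω : Type) [MeasurableSpace Ω] (μ : Measure Ω), IsProbabilityMeasure μ →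
        ∀ Z : Ω → ℝ, Measurable Z → (∀ ω, 0 ≤ Z ω) →
          (∫⁻ ω, ENNReal.ofReal (Z ω) ∂μ) = 1 →
          (∫⁻ ω, ENNReal.ofReal (Z ω ^ 2) ∂μ) ≤ 9 / 4 →
          (∫ ω, Real.exp (-γ * Z ω) ∂μ) * Real.exp (γ / (1 + 2 * γ))
            ≤ Real.exp (-γ ^ 2) := by
  refine ⟨1 / 40, ⟨by norm_num, by norm_num⟩, ?_⟩
  rintro γ ⟨hγ0, hγ1⟩ Ω _ μ _ Z hZm hZ0 hEZ hEZ2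
  have hZ : 0 ≤ᵐ[μ] Z := .of_forall hZ0
  have hZ2 : 0 ≤ᵐ[μ] fun ω ↦ Z ω ^ 2 := .of_forall fun ω ↦ sq_nonneg (Z ω)
  have hZ2m : AEStronglyMeasurable (fun ω ↦ Z ω ^ 2) μ := (hZm.pow_const 2).aestronglyMeasurable
  have h94 : (9 / 4 : ENNReal) ≠ ⊤ := ENNReal.div_ne_top (by norm_num) (by norm_num)
  have hmean : ∫ ω, Z ω ∂μ = 1 := by
    rw [integral_eq_lintegral_of_nonneg_ae hZ hZm.aestronglyMeasurable, hEZ, ENNReal.toReal_one]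
  have hsecond : ∫ ω, Z ω ^ 2 ∂μ ≤ 9 / 4 := by
    rw [integral_eq_lintegral_of_nonneg_ae hZ2 hZ2m]
    simpa [ENNReal.toReal_div] using ENNReal.toReal_mono h94 hEZ2
  have hmgf := integral_exp_neg_mul_le hZ
    (integrable_of_lintegral_ofReal_ne_top hZm.aestronglyMeasurable hZ (by simp [hEZ]))
    (integrable_of_lintegral_ofReal_ne_top hZ2m hZ2 (ne_top_of_le_ne_top h94 hEZ2)) hγ0.le
  calc (∫ ω, Real.exp (-γ * Z ω) ∂μ) * Real.exp (γ / (1 + 2 * γ))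
      ≤ (1 - γ + 9 / 8 * γ ^ 2) * Real.exp (γ / (1 + 2 * γ)) := by
        gcongr
        rw [hmean] at hmgf
        nlinarith [sq_nonneg γ]
    _ ≤ Real.exp (-γ ^ 2) := Real.one_sub_add_sq_mul_exp_le_exp_neg_sq hγ0.le hγ1
end

section
/- Let Φ denote the cumulative distribution function of the standard normal distribution N(0,1). For every σ > 0, every real Γ > 0, and every integer K with 1 ≤ K ≤ Γ/2, one has Σ_{k=1}^{K} [ Φ( k/(σ·√(Γ−k)) ) − Φ( k/(σ·√(Γ+k)) ) ] ≤ (6/Γ)·(2 + 3σ²Γ) = 12/Γ + 18σ². -/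
open MeasureTheory ProbabilityTheory

/-- The cumulative distribution function `Φ` of the standard normal distribution `N(0,1)`. -/
noncomputable def stdGaussianCDF (y : ℝ) : ℝ :=
  (gaussianReal 0 1 (Set.Iic y)).toReal

/-!
For `0 ≤ b ≤ a` the Gaussian mass of `(b, a]` is at most `(a - b) φ(b)`. For the `k`-th term,
`a - b ≤ 2√3 k² / (σ Γ √Γ)` and `φ(b) ≤ e^{-k²/(3σ²Γ)} / √(2π)` because `k ≤ Γ/2`. Writing
`k² e^{-β k²} ≤ (2/β) e^{-β k²/2}` leaves a sum of a decreasing function of `k`, which is at most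
the half-line Gaussian integral `√(π/β)/2`; with `β = 1/(3σ²Γ)` the total is exactly `18σ²`.
-/

open Real Set

lemma gaussianPDFReal_antitoneOn (μ : ℝ) (v : NNReal) :
    AntitoneOn (gaussianPDFReal μ v) (Ici μ) := by
  intro x hx y _ hxy
  simp only [gaussianPDFReal]
  gcongr
  exact sub_nonneg.2 hx

lemma stdGaussianCDF_sub_le {a b : ℝ} (hb : 0 ≤ b) (hba : b ≤ a) :
    stdGaussianCDF a - stdGaussianCDF b ≤ (a - b) * gaussianPDFReal 0 1 b := by
  have hIoc : stdGaussianCDF a - stdGaussianCDF b = ∫ x in Ioc b a, gaussianPDFReal 0 1 x := by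
    rw [stdGaussianCDF, stdGaussianCDF, ← measureReal_def, ← measureReal_def,
      ← measureReal_sdiff (Iic_subset_Iic.2 hba) measurableSet_Iic, Iic_sdiff_Iic, measureReal_def,
      gaussianReal_apply_eq_integral 0 one_ne_zero, ENNReal.toReal_ofReal
        (setIntegral_nonneg measurableSet_Ioc fun x _ => gaussianPDFReal_nonneg 0 1 x)]
  calc stdGaussianCDF a - stdGaussianCDF b
      ≤ ‖∫ x in Ioc b a, gaussianPDFReal 0 1 x‖ := hIoc ▸ le_norm_self _
    _ ≤ gaussianPDFReal 0 1 b * volume.real (Ioc b a) :=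
        norm_setIntegral_le_of_norm_le_const measure_Ioc_lt_top fun x hx => by
          rw [Real.norm_of_nonneg (gaussianPDFReal_nonneg 0 1 x)]
          exact gaussianPDFReal_antitoneOn 0 1 hb (hb.trans hx.1.le) hx.1.le
    _ = (a - b) * gaussianPDFReal 0 1 b := by rw [Real.volume_real_Ioc_of_le hba, mul_comm]

lemma one_div_sqrt_sub_sub_one_div_sqrt_add_le {Γ x : ℝ} (hΓ : 0 < Γ) (hx : 0 ≤ x)
    (hxΓ : x ≤ Γ / 2) :
    1 / √(Γ - x) - 1 / √(Γ + x) ≤ 2 * √3 * x / (Γ * √Γ) := by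
  obtain ⟨p, hp⟩ : ∃ p, p = √(Γ - x) := ⟨_, rfl⟩
  obtain ⟨q, hq⟩ : ∃ q, q = √(Γ + x) := ⟨_, rfl⟩
  have hp0 : 0 < p := hp ▸ sqrt_pos.2 (by linarith)
  have hq0 : 0 < q := hq ▸ sqrt_pos.2 (by linarith)
  have hpq : p ≤ q := hp ▸ hq ▸ sqrt_le_sqrt (by linarith)
  have hrq : √Γ ≤ q := hq ▸ sqrt_le_sqrt (by linarith)
  have hsq : q ^ 2 - p ^ 2 = 2 * x := by
    rw [hp, hq, sq_sqrt (by linarith), sq_sqrt (by linarith)]; ring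
  have hdiff : (q - p) * √Γ ≤ 2 * x := by
    nlinarith [mul_le_mul_of_nonneg_left (hrq.trans (le_add_of_nonneg_right hp0.le))
      (sub_nonneg.2 hpq)]
  have hprod : Γ ≤ √3 * (p * q) := by
    rw [hp, hq, ← sqrt_mul (by linarith), ← sqrt_mul (by norm_num)]
    exact le_sqrt_of_sq_le (by nlinarith)
  rw [← hp, ← hq, div_sub_div _ _ hp0.ne' (hp0.trans_le hpq).ne',
    div_le_div_iff₀ (by positivity) (by positivity)]
  calc (1 * q - p * 1) * (Γ * √Γ) = ((q - p) * √Γ) * Γ := by ring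
    _ ≤ (2 * x) * (√3 * (p * q)) := mul_le_mul hdiff hprod hΓ.le (by positivity)
    _ = 2 * √3 * x * (p * q) := by ring

lemma gaussianPDFReal_div_sqrt_add_le {σ Γ x : ℝ} (hσ : 0 < σ) (hΓ : 0 < Γ) (hx : 0 ≤ x)
    (hxΓ : x ≤ Γ / 2) :
    gaussianPDFReal 0 1 (x / (σ * √(Γ + x)))
      ≤ (√(2 * π))⁻¹ * rexp (-(3 * σ ^ 2 * Γ)⁻¹ * x ^ 2) := by
  simp only [gaussianPDFReal, NNReal.coe_one, mul_one, sub_zero]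
  gcongr
  rw [div_pow, mul_pow, sq_sqrt (by linarith), neg_mul, neg_div, neg_le_neg_iff, inv_mul_eq_div,
    div_div]
  refine div_le_div_of_nonneg_left (sq_nonneg x) (by positivity) ?_
  nlinarith [sq_nonneg σ]

lemma stdGaussianCDF_div_sqrt_sub_sub_le {σ Γ x : ℝ} (hσ : 0 < σ) (hΓ : 0 < Γ) (hx : 0 ≤ x)
    (hxΓ : x ≤ Γ / 2) :
    stdGaussianCDF (x / (σ * √(Γ - x))) - stdGaussianCDF (x / (σ * √(Γ + x)))
      ≤ 2 * √3 * x ^ 2 / (σ * Γ * √Γ) * ((√(2 * π))⁻¹ * rexp (-(3 * σ ^ 2 * Γ)⁻¹ * x ^ 2)) := by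
  have hdiff : x / (σ * √(Γ - x)) - x / (σ * √(Γ + x)) ≤ 2 * √3 * x ^ 2 / (σ * Γ * √Γ) := by
    calc x / (σ * √(Γ - x)) - x / (σ * √(Γ + x))
        = x / σ * (1 / √(Γ - x) - 1 / √(Γ + x)) := by field_simp
      _ ≤ x / σ * (2 * √3 * x / (Γ * √Γ)) := by
          gcongr; exact one_div_sqrt_sub_sub_one_div_sqrt_add_le hΓ hx hxΓ
      _ = 2 * √3 * x ^ 2 / (σ * Γ * √Γ) := by field_simp
  have hba : x / (σ * √(Γ + x)) ≤ x / (σ * √(Γ - x)) :=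
    div_le_div_of_nonneg_left hx (mul_pos hσ (sqrt_pos.2 (by linarith))) (by gcongr; linarith)
  exact (stdGaussianCDF_sub_le (by positivity) hba).trans <|
    mul_le_mul hdiff (gaussianPDFReal_div_sqrt_add_le hσ hΓ hx hxΓ)
      (gaussianPDFReal_nonneg 0 1 _) (by positivity)

lemma sum_exp_neg_mul_sq_le {b : ℝ} (hb : 0 < b) (K : ℕ) :
    ∑ k ∈ Finset.Icc 1 K, rexp (-b * k ^ 2) ≤ √(π / b) / 2 := by
  have hanti : AntitoneOn (fun x : ℝ => rexp (-b * x ^ 2)) (Ici 0) := fun x hx _ _ hxy =>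
    exp_le_exp.2 (mul_le_mul_of_nonpos_left (pow_le_pow_left₀ hx hxy 2) (neg_nonpos.2 hb.le))
  calc ∑ k ∈ Finset.Icc 1 K, rexp (-b * k ^ 2)
      = ∑ i ∈ Finset.Ico 0 K, rexp (-b * ((i + 1 : ℕ) : ℝ) ^ 2) := by
        rw [Finset.sum_Ico_add' (fun k : ℕ => rexp (-b * (k : ℝ) ^ 2)), zero_add,
          Finset.Ico_add_one_right_eq_Icc]
    _ ≤ ∫ x in (0 : ℕ)..K, rexp (-b * x ^ 2) :=
        AntitoneOn.sum_le_integral_Ico (Nat.zero_le K)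
          (hanti.mono (by rw [Nat.cast_zero]; exact Icc_subset_Ici_self))
    _ ≤ ∫ x in Ioi 0, rexp (-b * x ^ 2) := by
        rw [Nat.cast_zero, intervalIntegral.integral_of_le (Nat.cast_nonneg K)]
        exact setIntegral_mono_set (integrable_exp_neg_mul_sq hb).integrableOn
          (Filter.Eventually.of_forall fun x => (exp_pos _).le) Ioc_subset_Ioi_self.eventuallyLE
    _ = √(π / b) / 2 := integral_gaussian_Ioi b

lemma sq_mul_exp_neg_mul_sq_le {b : ℝ} (hb : 0 < b) (x : ℝ) :
    x ^ 2 * rexp (-b * x ^ 2) ≤ 2 / b * rexp (-(b / 2) * x ^ 2) := by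
  have hy : b / 2 * x ^ 2 * rexp (-(b / 2) * x ^ 2) ≤ 1 := by
    rw [neg_mul, exp_neg, ← div_eq_mul_inv, div_le_one (exp_pos _)]
    linarith [add_one_le_exp (b / 2 * x ^ 2)]
  calc x ^ 2 * rexp (-b * x ^ 2)
      = 2 / b * (b / 2 * x ^ 2 * rexp (-(b / 2) * x ^ 2)) * rexp (-(b / 2) * x ^ 2) := by
        rw [mul_assoc, mul_assoc, ← exp_add]; field_simp; ring_nf
    _ ≤ 2 / b * 1 * rexp (-(b / 2) * x ^ 2) := by gcongr
    _ = 2 / b * rexp (-(b / 2) * x ^ 2) := by rw [mul_one]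

lemma sum_sq_mul_exp_neg_mul_sq_le {b : ℝ} (hb : 0 < b) (K : ℕ) :
    ∑ k ∈ Finset.Icc 1 K, (k : ℝ) ^ 2 * rexp (-b * k ^ 2) ≤ √(2 * π / b) / b :=
  calc ∑ k ∈ Finset.Icc 1 K, (k : ℝ) ^ 2 * rexp (-b * k ^ 2)
      ≤ ∑ k ∈ Finset.Icc 1 K, 2 / b * rexp (-(b / 2) * k ^ 2) :=
        Finset.sum_le_sum fun k _ => sq_mul_exp_neg_mul_sq_le hb k
    _ ≤ 2 / b * (√(π / (b / 2)) / 2) := by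
        rw [← Finset.mul_sum]; gcongr; exact sum_exp_neg_mul_sq_le (half_pos hb) K
    _ = √(2 * π / b) / b := by rw [show π / (b / 2) = 2 * π / b by ring]; ring

theorem sum_gaussianCDF_diff_le_general (σ Γ : ℝ) (hσ : 0 < σ) (hΓ : 0 < Γ)
    (K : ℕ) (hK2 : (K : ℝ) ≤ Γ / 2) :
    (∑ k ∈ Finset.Icc 1 K,
        (stdGaussianCDF ((k : ℝ) / (σ * Real.sqrt (Γ - (k : ℝ))))
          - stdGaussianCDF ((k : ℝ) / (σ * Real.sqrt (Γ + (k : ℝ))))))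
      ≤ 6 / Γ * (2 + 3 * σ ^ 2 * Γ) ∧
    6 / Γ * (2 + 3 * σ ^ 2 * Γ) = 12 / Γ + 18 * σ ^ 2 := by
  have hsplit : 6 / Γ * (2 + 3 * σ ^ 2 * Γ) = 12 / Γ + 18 * σ ^ 2 := by field_simp; ring
  refine ⟨?_, hsplit⟩
  obtain ⟨b, hb⟩ : ∃ b : ℝ, b = (3 * σ ^ 2 * Γ)⁻¹ := ⟨_, rfl⟩
  obtain ⟨C, hC⟩ : ∃ C : ℝ, C = 2 * √3 / (σ * Γ * √Γ) * (√(2 * π))⁻¹ := ⟨_, rfl⟩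
  have hC18 : C * (√(2 * π / b) / b) = 18 * σ ^ 2 := by
    have hsqrt : √(2 * π / b) = √(2 * π) * (√3 * σ * √Γ) := by
      rw [hb, div_inv_eq_mul, sqrt_mul (by positivity : (0 : ℝ) ≤ 2 * π),
        sqrt_mul (by positivity : (0 : ℝ) ≤ 3 * σ ^ 2), sqrt_mul (by norm_num : (0 : ℝ) ≤ 3),
        sqrt_sq hσ.le]
    rw [hsqrt, hb, hC]
    field_simp
    rw [sq_sqrt (by norm_num : (0 : ℝ) ≤ 3)]
    ring
  calc _ ≤ ∑ k ∈ Finset.Icc 1 K, C * ((k : ℝ) ^ 2 * rexp (-b * k ^ 2)) := by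
        refine Finset.sum_le_sum fun k hk => ?_
        have hkK : (k : ℝ) ≤ K := Nat.cast_le.2 (Finset.mem_Icc.1 hk).2
        rw [hb, hC]
        exact (stdGaussianCDF_div_sqrt_sub_sub_le hσ hΓ k.cast_nonneg (by linarith)).trans_eq
          (by ring)
    _ = C * ∑ k ∈ Finset.Icc 1 K, (k : ℝ) ^ 2 * rexp (-b * k ^ 2) := (Finset.mul_sum ..).symm
    _ ≤ C * (√(2 * π / b) / b) := by
        gcongr
        · rw [hC]; positivity
        · exact sum_sq_mul_exp_neg_mul_sq_le (hb ▸ by positivity) K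
    _ = 18 * σ ^ 2 := hC18
    _ ≤ 12 / Γ + 18 * σ ^ 2 := le_add_of_nonneg_left (by positivity)
    _ = 6 / Γ * (2 + 3 * σ ^ 2 * Γ) := hsplit.symm

/-- For every `σ > 0`, every real `Γ > 0` and every integer `K` with
`1 ≤ K ≤ Γ/2`:
`Σ_{k=1}^{K} [Φ(k/(σ√(Γ−k))) − Φ(k/(σ√(Γ+k)))] ≤ (6/Γ)(2 + 3σ²Γ) = 12/Γ + 18σ²`. -/
theorem sum_gaussianCDF_diff_le (σ Γ : ℝ) (hσ : 0 < σ) (hΓ : 0 < Γ)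
    (K : ℕ) (hK1 : 1 ≤ K) (hK2 : (K : ℝ) ≤ Γ / 2) :
    (∑ k ∈ Finset.Icc 1 K,
        (stdGaussianCDF ((k : ℝ) / (σ * Real.sqrt (Γ - (k : ℝ))))
          - stdGaussianCDF ((k : ℝ) / (σ * Real.sqrt (Γ + (k : ℝ))))))
      ≤ 6 / Γ * (2 + 3 * σ ^ 2 * Γ) ∧
    6 / Γ * (2 + 3 * σ ^ 2 * Γ) = 12 / Γ + 18 * σ ^ 2 :=
  sum_gaussianCDF_diff_le_general σ Γ hσ hΓ K hK2
end

section
/- With the notation of the context, the inequality 2·inf_{x∈A}[ f(x) + W(x) ] − 2·W(O_1) − h₁ ≥ min_{j∈L} R_j^{(2)} holds. -/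
/-!
Removing from a `{j}`-graph its arrow `o → g o` leaves an `{o, j}`-graph, and that arrow costs at
least `h₁ = min_{m ≠ o} V(o, m)`; hence `W(O_j) − h₁ ≥ W(O_o ∪ O_j)` for `j ≠ o`. If `j₀` minimizes
`W(O_j) + inf_x [f x + v_j x]`, then `2·inf_x [f x + W(x)] − 2·W(O_o) − h₁` is at least
`2·(W(O_{j₀}) + inf_x [f x + v_{j₀} x]) − 2·W(O_o) − h₁`, which is `R_o` when `j₀ = o` and
dominates `R_{j₀}` otherwise.
-/

open scoped Classical

namespace FW

/-- `min_{g ∈ G(W)} Σ_{(m→n)∈g} V(O_m,O_n)`. -/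
noncomputable def graphMin {l : ℕ} (V : Fin l → Fin l → ℝ) (W : Finset (Fin l)) : ℝ :=
  sInf ((fun g : Fin l → Fin l => ∑ i ∈ Wᶜ, V i (g i)) '' {g | IsWGraph W g})

open Function Set

theorem exists_iterate_update_self_mem_insert {α : Type*} [DecidableEq α] {g : α → α}
    {s : Finset α} (o : α) :
    ∀ {n : ℕ} {i : α}, g^[n] i ∈ s → ∃ m : ℕ, (update g o o)^[m] i ∈ insert o s
  | 0, _, hi => ⟨0, Finset.mem_insert_of_mem hi⟩
  | n + 1, i, hi => by
    by_cases hio : i = o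
    · exact ⟨0, hio ▸ Finset.mem_insert_self o s⟩
    · obtain ⟨m, hm⟩ := exists_iterate_update_self_mem_insert o (n := n) (i := g i) hi
      exact ⟨m + 1, by rwa [iterate_succ_apply, update_of_ne hio]⟩

variable {l : ℕ} {V : Fin l → Fin l → ℝ} {W : Finset (Fin l)}

theorem exists_isWGraph (hW : W.Nonempty) : ∃ g, IsWGraph W g := by
  obtain ⟨w, hw⟩ := hW
  refine ⟨fun i => if i ∈ W then i else w, fun i hi => if_pos hi, fun i hi => ⟨?_, 1, ?_⟩⟩
  · dsimp only
    rw [if_neg hi]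
    rintro rfl
    exact hi hw
  · simpa [if_neg hi] using hw

theorem IsWGraph.insert_update_self {g : Fin l → Fin l} (hg : IsWGraph W g) (o : Fin l) :
    IsWGraph (insert o W) (update g o o) := by
  refine ⟨fun i hi => ?_, fun i hi => ?_⟩
  · by_cases hio : i = o
    · rw [hio, update_self]
    · rw [update_of_ne hio, hg.1 i ((Finset.mem_insert.1 hi).resolve_left hio)]
  · rw [Finset.mem_insert, not_or] at hi
    obtain ⟨hgi, n, hn⟩ := hg.2 i hi.2
    exact ⟨by rwa [update_of_ne hi.1], exists_iterate_update_self_mem_insert o hn⟩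

theorem graphMin_le {g : Fin l → Fin l} (hg : IsWGraph W g) :
    graphMin V W ≤ ∑ i ∈ Wᶜ, V i (g i) :=
  csInf_le ((Set.toFinite _).image _).bddBelow ⟨g, hg, rfl⟩

theorem le_graphMin (hW : W.Nonempty) {a : ℝ}
    (h : ∀ g, IsWGraph W g → a ≤ ∑ i ∈ Wᶜ, V i (g i)) : a ≤ graphMin V W :=
  le_csInf (Set.Nonempty.image _ (exists_isWGraph hW)) (by rintro _ ⟨g, hg, rfl⟩; exact h g hg)

theorem iInf_add_graphMin_insert_le (hW : W.Nonempty) {o : Fin l} (ho : o ∉ W) :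
    (⨅ m : {m : Fin l // m ≠ o}, V o m.val) + graphMin V (insert o W) ≤ graphMin V W := by
  refine le_graphMin hW fun g hg => ?_
  have hgo : g o ≠ o := (hg.2 o ho).1
  have hsum : ∑ i ∈ (insert o W)ᶜ, V i (update g o o i) = ∑ i ∈ (insert o W)ᶜ, V i (g i) :=
    Finset.sum_congr rfl fun i hi => by
      rw [update_of_ne
        (ne_of_mem_of_not_mem (Finset.mem_insert_self o W) (Finset.mem_compl.1 hi)).symm]
  calc (⨅ m : {m : Fin l // m ≠ o}, V o m.val) + graphMin V (insert o W)
      ≤ V o (g o) + ∑ i ∈ (insert o W)ᶜ, V i (update g o o i) :=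
        add_le_add (ciInf_le (Set.finite_range _).bddBelow (⟨g o, hgo⟩ : {m // m ≠ o}))
          (graphMin_le (hg.insert_update_self o))
    _ = ∑ i ∈ Wᶜ, V i (g i) := by
        rw [hsum, Finset.compl_insert]
        convert Finset.add_sum_erase _ (fun i => V i (g i)) (Finset.mem_compl.2 ho)

theorem add_iInf_le_iInf_add_iInf {ι A : Type*} [Nonempty A] {c : ι → ℝ} {f : A → ℝ}
    {u : ι → A → ℝ} (hu : ∀ j, BddBelow (range fun x => f x + u j x)) {j₀ : ι}
    (hj₀ : ∀ j, c j₀ + ⨅ x, (f x + u j₀ x) ≤ c j + ⨅ x, (f x + u j x)) :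
    c j₀ + ⨅ x, (f x + u j₀ x) ≤ ⨅ x, (f x + ⨅ j, (c j + u j x)) := by
  have : Nonempty ι := ⟨j₀⟩
  refine le_ciInf fun x => ?_
  have : c j₀ + (⨅ x, (f x + u j₀ x)) - f x ≤ ⨅ j, (c j + u j x) :=
    le_ciInf fun j => by linarith [hj₀ j, ciInf_le (hu j) x]
  linarith

/-- `o` plays the role of the index `1`, `graphMin V {j}` of `W(O_j)`, `graphMin V {o, j}` of
`W(O_1 ∪ O_j)`, and the infimum over `{m // m ≠ o}` of `h₁`. -/
theorem two_inf_W_sub_ge_min_R2_general {l : ℕ} (o : Fin l)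
    (V : Fin l → Fin l → ℝ)
    {A : Type} [Nonempty A]
    (f : A → ℝ) (hf : BddBelow (Set.range f))
    (v : Fin l → A → ℝ) (hv : ∀ j x, 0 ≤ v j x) :
    2 * (⨅ x : A, (f x + ⨅ j : Fin l, (graphMin V {j} + v j x)))
        - 2 * graphMin V {o} - (⨅ m : {m : Fin l // m ≠ o}, V o m.val)
      ≥ ⨅ j : Fin l,
          (if j = o then
            2 * (⨅ x : A, (f x + v o x)) - (⨅ m : {m : Fin l // m ≠ o}, V o m.val)
          else
            2 * (⨅ x : A, (f x + v j x)) + graphMin V {j}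
              - 2 * graphMin V {o} + graphMin V {o, j}) := by
  have : Nonempty (Fin l) := ⟨o⟩
  obtain ⟨c, hc⟩ := hf
  have hbdd : ∀ j, BddBelow (range fun x => f x + v j x) := fun j =>
    ⟨c, by rintro _ ⟨x, rfl⟩; linarith [hc ⟨x, rfl⟩, hv j x]⟩
  obtain ⟨j₀, hj₀⟩ := Finite.exists_min fun j => graphMin V {j} + ⨅ x, (f x + v j x)
  have hmin := add_iInf_le_iInf_add_iInf (c := fun j => graphMin V {j}) hbdd hj₀
  refine (ciInf_le (Set.finite_range _).bddBelow j₀).trans ?_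
  split_ifs with hj
  · subst hj
    linarith
  · have hkey := iInf_add_graphMin_insert_le (V := V) (Finset.singleton_nonempty j₀)
      (Finset.notMem_singleton.2 (Ne.symm hj))
    linarith

/-- Lemma 8.3. With `o` playing the role of the index `1`,
`W(O_j) = graphMin V {j}`, `W(O_1∪O_j) = graphMin V {o,j}`,
`h₁ = min_{ℓ≠1} V(O_1,O_ℓ)`, `W(x) = min_j [W(O_j) + v_j(x)]`, one has
`2·inf_{x∈A}[f(x) + W(x)] − 2·W(O_1) − h₁ ≥ min_{j∈L} R_j^{(2)}`, where
`R_1^{(2)} = 2·inf_{x∈A}[f(x)+v_1(x)] − h₁` and, for `j ≠ 1`,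
`R_j^{(2)} = 2·inf_{x∈A}[f(x)+v_j(x)] + W(O_j) − 2·W(O_1) + W(O_1∪O_j)`. -/
theorem two_inf_W_sub_ge_min_R2 {l : ℕ} (hl : 2 ≤ l) (o : Fin l)
    (V : Fin l → Fin l → ℝ) (hV : ∀ i j, 0 ≤ V i j)
    {A : Type} [Nonempty A]
    (f : A → ℝ) (hf : BddBelow (Set.range f))
    (v : Fin l → A → ℝ) (hv : ∀ j x, 0 ≤ v j x) :
    2 * (⨅ x : A, (f x + ⨅ j : Fin l, (graphMin V {j} + v j x)))
        - 2 * graphMin V {o} - (⨅ m : {m : Fin l // m ≠ o}, V o m.val)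
      ≥ ⨅ j : Fin l,
          (if j = o then
            2 * (⨅ x : A, (f x + v o x)) - (⨅ m : {m : Fin l // m ≠ o}, V o m.val)
          else
            2 * (⨅ x : A, (f x + v j x)) + graphMin V {j}
              - 2 * graphMin V {o} + graphMin V {o, j}) :=
  two_inf_W_sub_ge_min_R2_general o V f hf v hv

end FW
end
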